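/- For every t ∈ ℝ, g₂(t) = b⁻(a(b⁻(a⁻(b(b(t)))))), where a(t) = t + 1 and a⁻(t) = t − 1; that is, the piecewise formula defining g₂ equals the composition b b a⁻¹ b⁻¹ a b⁻¹ (maps applied left to right) of the generators of the Lodha–Moore group. -/

import Mathlib

/-- The generator `a` of the Lodha–Moore group: translation by 1. -/
noncomputable def LMa (t : ℝ) : ℝ := t + 1

/-- The inverse of `LMa`: translation by -1. -/
noncomputable def LMaInv (t : ℝ) : ℝ := t - 1

/-- The generator `b` of the Lodha–Moore group. -/
noncomputable def LMb (t : ℝ) : ℝ :=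
  if t ≤ 0 then t
  else if t ≤ 1 / 2 then t / (1 - t)
  else if t ≤ 1 then (3 * t - 1) / t
  else t + 1

/-- The inverse of the generator `b` of the Lodha–Moore group. -/
noncomputable def LMbInv (t : ℝ) : ℝ :=
  if t ≤ 0 then t
  else if t ≤ 1 then t / (t + 1)
  else if t ≤ 2 then 1 / (3 - t)
  else t - 1

/-- The element `g₂ = b b a⁻¹ b⁻¹ a b⁻¹` (maps applied left to right)
as a piecewise fractional linear map. -/
noncomputable def g₂ (t : ℝ) : ℝ :=
  if t ≤ 0 then t
  else if t ≤ 1 / 3 then t / (1 - t)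
  else if t ≤ 1 / 2 then (4 * t - 1) / (5 * t - 1)
  else if t ≤ 1 then 1 / (2 - t)
  else t

/-! The map `b ∘ b` is a single fractional linear map on each of `(-∞, 0]`, `(0, 1/3]`,
`(1/3, 1]`, `(1, ∞)`, and so is the rest of the word, `b⁻¹ ∘ a ∘ b⁻¹ ∘ a⁻¹`, on each of
`(-∞, 1]`, `(1, 2]`, `(2, 3]`, `(3, ∞)`. Tracking where `b ∘ b` sends each piece of `g₂`
(`(1/3, 1/2]` to `(1, 2]`, `(1/2, 1]` to `(2, 3]`), every piece of the composition is the
product of two fractional linear maps, which simplifies to the matching piece of `g₂`. -/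

lemma LMb_of_nonpos {t : ℝ} (h : t ≤ 0) : LMb t = t := by rw [LMb, if_pos h]

lemma LMb_of_pos_of_le_half {t : ℝ} (h0 : 0 < t) (h1 : t ≤ 1 / 2) : LMb t = t / (1 - t) := by
  rw [LMb, if_neg h0.not_ge, if_pos h1]

lemma LMb_of_half_lt_of_le_one {t : ℝ} (h0 : 1 / 2 < t) (h1 : t ≤ 1) :
    LMb t = (3 * t - 1) / t := by
  rw [LMb, if_neg (by linarith), if_neg h0.not_ge, if_pos h1]

lemma LMb_of_one_lt {t : ℝ} (h : 1 < t) : LMb t = t + 1 := by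
  rw [LMb, if_neg (by linarith), if_neg (by linarith), if_neg h.not_ge]

lemma LMbInv_of_nonpos {t : ℝ} (h : t ≤ 0) : LMbInv t = t := by rw [LMbInv, if_pos h]

lemma LMbInv_of_pos_of_le_one {t : ℝ} (h0 : 0 < t) (h1 : t ≤ 1) : LMbInv t = t / (t + 1) := by
  rw [LMbInv, if_neg h0.not_ge, if_pos h1]

lemma LMbInv_of_one_lt_of_le_two {t : ℝ} (h0 : 1 < t) (h1 : t ≤ 2) :
    LMbInv t = 1 / (3 - t) := by
  rw [LMbInv, if_neg (by linarith), if_neg h0.not_ge, if_pos h1]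

lemma LMbInv_of_two_lt {t : ℝ} (h : 2 < t) : LMbInv t = t - 1 := by
  rw [LMbInv, if_neg (by linarith), if_neg (by linarith), if_neg h.not_ge]

lemma LMb_LMb_of_pos_of_le_third {t : ℝ} (h0 : 0 < t) (h1 : t ≤ 1 / 3) :
    LMb (LMb t) = t / (1 - 2 * t) := by
  have hs : 0 < 1 - t := by linarith
  rw [LMb_of_pos_of_le_half h0 (by linarith),
    LMb_of_pos_of_le_half (by positivity) (by rw [div_le_iff₀ hs]; linarith)]
  have : 1 - 2 * t ≠ 0 := by linarith
  field_simp
  ring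

lemma LMb_LMb_of_third_lt_of_le_one {t : ℝ} (h0 : 1 / 3 < t) (h1 : t ≤ 1) :
    LMb (LMb t) = (4 * t - 1) / t := by
  have ht : 0 < t := by linarith
  rcases le_or_gt t (1 / 2) with h2 | h2
  · have hs : 0 < 1 - t := by linarith
    rw [LMb_of_pos_of_le_half ht h2, LMb_of_half_lt_of_le_one
      (by rw [lt_div_iff₀ hs]; linarith) (by rw [div_le_iff₀ hs]; linarith)]
    field_simp
    ring
  · rw [LMb_of_half_lt_of_le_one h2 h1, LMb_of_one_lt (by rw [lt_div_iff₀ ht]; linarith)]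
    field_simp
    ring

lemma LMbInv_LMa_LMbInv_LMaInv_of_le_one {s : ℝ} (h : s ≤ 1) :
    LMbInv (LMa (LMbInv (LMaInv s))) = LMbInv s := by
  rw [LMaInv, LMbInv_of_nonpos (t := s - 1) (by linarith), LMa, sub_add_cancel]

lemma LMbInv_LMa_LMbInv_LMaInv_of_one_lt_of_le_two {s : ℝ} (h0 : 1 < s) (h1 : s ≤ 2) :
    LMbInv (LMa (LMbInv (LMaInv s))) = s / (s + 1) := by
  have hs : 0 < s := by linarith
  have hu0 : 0 < (s - 1) / s := div_pos (by linarith) hs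
  have hu1 : (s - 1) / s ≤ 1 := by rw [div_le_one hs]; linarith
  rw [LMaInv, LMbInv_of_pos_of_le_one (t := s - 1) (by linarith) (by linarith), sub_add_cancel,
    LMa, LMbInv_of_one_lt_of_le_two (by linarith) (by linarith)]
  have hd : 3 - ((s - 1) / s + 1) = (s + 1) / s := by field_simp; ring
  rw [hd, one_div_div]

lemma LMbInv_LMa_LMbInv_LMaInv_of_two_lt_of_le_three {s : ℝ} (h0 : 2 < s) (h1 : s ≤ 3) :
    LMbInv (LMa (LMbInv (LMaInv s))) = 1 / (2 - 1 / (4 - s)) := by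
  have hs : 0 < 4 - s := by linarith
  have hu0 : 0 < 1 / (4 - s) := by positivity
  have hu1 : 1 / (4 - s) ≤ 1 := by rw [div_le_one hs]; linarith
  rw [LMaInv, LMbInv_of_one_lt_of_le_two (t := s - 1) (by linarith) (by linarith), LMa,
    show 3 - (s - 1) = 4 - s by ring, LMbInv_of_one_lt_of_le_two (by linarith) (by linarith)]
  ring

lemma LMbInv_LMa_LMbInv_LMaInv_of_three_lt {s : ℝ} (h : 3 < s) :
    LMbInv (LMa (LMbInv (LMaInv s))) = s - 2 := by
  rw [LMaInv, LMbInv_of_two_lt (t := s - 1) (by linarith), LMa, LMbInv_of_two_lt (by linarith)]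
  ring

/-- The piecewise formula defining `g₂` agrees with the composition
`b b a⁻¹ b⁻¹ a b⁻¹` of the generators of the Lodha–Moore group. -/
theorem g₂_eq_comp (t : ℝ) :
    g₂ t = LMbInv (LMa (LMbInv (LMaInv (LMb (LMb t))))) := by
  unfold g₂
  split_ifs with h0 h1 h2 h3
  · rw [LMb_of_nonpos h0, LMb_of_nonpos h0, LMbInv_LMa_LMbInv_LMaInv_of_le_one (by linarith),
      LMbInv_of_nonpos h0]
  all_goals push Not at *
  · have hs : 0 < 1 - 2 * t := by linarith
    have hu : t / (1 - 2 * t) ≤ 1 := by rw [div_le_one hs]; linarith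
    rw [LMb_LMb_of_pos_of_le_third h0 h1, LMbInv_LMa_LMbInv_LMaInv_of_le_one hu,
      LMbInv_of_pos_of_le_one (by positivity) hu, div_add_one hs.ne',
      div_div_div_cancel_right₀ hs.ne']
    ring
  · rw [LMb_LMb_of_third_lt_of_le_one h1 (by linarith),
      LMbInv_LMa_LMbInv_LMaInv_of_one_lt_of_le_two (by rw [lt_div_iff₀ h0]; linarith)
        (by rw [div_le_iff₀ h0]; linarith), div_add_one h0.ne', div_div_div_cancel_right₀ h0.ne']
    ring
  · have h4 : 4 - (4 * t - 1) / t = 1 / t := by field_simp; ring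
    rw [LMb_LMb_of_third_lt_of_le_one (by linarith) h3,
      LMbInv_LMa_LMbInv_LMaInv_of_two_lt_of_le_three (by rw [lt_div_iff₀ h0]; linarith)
        (by rw [div_le_iff₀ h0]; linarith), h4, one_div_one_div]
  · rw [LMb_of_one_lt h3, LMb_of_one_lt (by linarith),
      LMbInv_LMa_LMbInv_LMaInv_of_three_lt (by linarith)]
    ring
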